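/- Let T be a rooted binary phylogenetic tree on n ≥ 3 leaves and let i, j be two leaves that do not form a cherry in T. Then the closeness C_{i,j} of {i,j} in R(T) is strictly less than n − 2. -/

import Mathlib

/-- A rooted binary phylogenetic tree with leaves labeled by `α`. -/
inductive PTree (α : Type) : Type
  | leaf : α → PTree α
  | node : PTree α → PTree α → PTree α

namespace PTree

variable {α : Type}

/-- The list of leaf labels of a tree. -/
def leafList : PTree α → List α
  | .leaf a => [a]
  | .node l r => l.leafList ++ r.leafList

/-- The leaves are distinctly labeled. -/
def distinctLeaves (T : PTree α) : Prop := T.leafList.Nodup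

/-- All root-paths (`false` = go left, `true` = go right) to leaves labeled `a`. -/
def pathsTo [DecidableEq α] : PTree α → α → List (List Bool)
  | .leaf b, a => if a = b then [[]] else []
  | .node l r, a =>
      (l.pathsTo a).map (List.cons false) ++ (r.pathsTo a).map (List.cons true)

/-- Longest common prefix of two root-paths: the LCA of the two nodes. -/
def lcp : List Bool → List Bool → List Bool
  | a :: as, b :: bs => if a = b then a :: lcp as bs else []
  | _, _ => []

/-- `v` is a proper descendant of `u`, nodes being identified with root-paths. -/
def ProperDesc (v u : List Bool) : Prop := u <+: v ∧ u ≠ v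

/-- The triplet `xy|z` is consistent with `T`: the LCA of `x` and `y` is a
proper descendant of the LCA of `x` and `z`. -/
def Consistent [DecidableEq α] (T : PTree α) (x y z : α) : Prop :=
  ∃ p ∈ T.pathsTo x, ∃ q ∈ T.pathsTo y, ∃ r ∈ T.pathsTo z,
    ProperDesc (lcp p q) (lcp p r)

/-- The reflective triplet set `R(T)` of `T`: all triplets consistent with `T`,
a triplet `xy|z` being encoded as the pair `(s(x,y), z)`. -/
def Rset [DecidableEq α] (T : PTree α) : Set (Sym2 α × α) :=
  {t | ∃ x y z, T.Consistent x y z ∧ t = (s(x, y), z)}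

/-- The closeness `C_{i,j}` of the pair `{i,j}` in a triplet set `R`:
the number of leaves `k` with `ij|k ∈ R`. -/
noncomputable def closeness (R : Set (Sym2 α × α)) (i j : α) : ℕ := {k | (s(i, j), k) ∈ R}.ncard

/-- `{i,j}` form a cherry of `T`: two leaves sharing the same parent. -/
def IsCherry [DecidableEq α] (T : PTree α) (i j : α) : Prop :=
  ∃ p b, (p ++ [b]) ∈ T.pathsTo i ∧ (p ++ [!b]) ∈ T.pathsTo j

end PTree

namespace PTree

variable {α : Type}

theorem lcp_prefix_left : ∀ p q : List Bool, lcp p q <+: p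
  | [], _ => by simp [lcp]
  | _ :: _, [] => by simp [lcp]
  | a :: as, b :: bs => by
    by_cases h : a = b
    · simp only [lcp, if_pos h]
      exact List.cons_prefix_cons.mpr ⟨rfl, lcp_prefix_left as bs⟩
    · simp [lcp, h]

theorem lcp_comm : ∀ p q : List Bool, lcp p q = lcp q p
  | [], [] => rfl
  | [], _ :: _ => rfl
  | _ :: _, [] => rfl
  | a :: as, b :: bs => by
    by_cases h : a = b
    · subst h; simp [lcp, lcp_comm as bs]
    · simp [lcp, h, Ne.symm h]

theorem lcp_prefix_right (p q : List Bool) : lcp p q <+: q := by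
  rw [lcp_comm]; exact lcp_prefix_left q p

theorem lcp_cons_same (a : Bool) (p q : List Bool) :
    lcp (a :: p) (a :: q) = a :: lcp p q := by simp [lcp]

theorem prefix_lcp : ∀ (u p q : List Bool), u <+: p → u <+: q → u <+: lcp p q
  | [], _, _, _, _ => List.nil_prefix
  | x :: u, p, q, hp, hq => by
    obtain ⟨tp, rfl⟩ := hp
    obtain ⟨tq, rfl⟩ := hq
    rw [List.cons_append, List.cons_append, lcp_cons_same]
    exact List.cons_prefix_cons.mpr ⟨rfl,
      prefix_lcp u _ _ (List.prefix_append u tp) (List.prefix_append u tq)⟩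

theorem lcp_self : ∀ p : List Bool, lcp p p = p
  | [] => rfl
  | a :: as => by simp [lcp, lcp_self as]

theorem mem_pathsTo_leaf [DecidableEq α] {c a : α} {p : List Bool} :
    p ∈ (PTree.leaf c : PTree α).pathsTo a ↔ a = c ∧ p = [] := by
  by_cases h : a = c <;> simp [pathsTo, h]

theorem mem_pathsTo_node [DecidableEq α] {l r : PTree α} {a : α} {p : List Bool} :
    p ∈ (PTree.node l r).pathsTo a ↔
      (∃ p', p' ∈ l.pathsTo a ∧ p = false :: p') ∨
      (∃ p', p' ∈ r.pathsTo a ∧ p = true :: p') := by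
  simp [pathsTo, eq_comm]

theorem pathsTo_length [DecidableEq α] : ∀ (T : PTree α) (a : α),
    (T.pathsTo a).length = T.leafList.count a
  | .leaf b, a => by by_cases h : a = b <;> simp [pathsTo, leafList, h, List.count_cons, @eq_comm _ b a]
  | .node l r, a => by
    simp [pathsTo, leafList, pathsTo_length l a, pathsTo_length r a, List.count_append]

theorem mem_of_path [DecidableEq α] (T : PTree α) (a : α) (p : List Bool)
    (hp : p ∈ T.pathsTo a) : a ∈ T.leafList := by
  have h := pathsTo_length T a
  have h1 : 0 < (T.pathsTo a).length := List.length_pos_iff.mpr (List.ne_nil_of_mem hp)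
  rw [h] at h1
  exact List.count_pos_iff.mp h1

theorem path_of_mem [DecidableEq α] (T : PTree α) (a : α) (ha : a ∈ T.leafList) :
    ∃ p, p ∈ T.pathsTo a := by
  have h := pathsTo_length T a
  have h1 : 0 < (T.pathsTo a).length := by rw [h]; exact List.count_pos_iff.mpr ha
  exact List.exists_mem_of_length_pos h1

theorem paths_unique [DecidableEq α] (T : PTree α) (hd : T.distinctLeaves) {a : α}
    {p q : List Bool} (hp : p ∈ T.pathsTo a) (hq : q ∈ T.pathsTo a) : p = q := by
  have hl : (T.pathsTo a).length ≤ 1 := by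
    rw [pathsTo_length]; exact List.nodup_iff_count_le_one.mp hd a
  cases hh : T.pathsTo a with
  | nil => rw [hh] at hp; exact absurd hp List.not_mem_nil
  | cons x t =>
    cases t with
    | nil => rw [hh] at hp hq; simp at hp hq; rw [hp, hq]
    | cons y s => rw [hh] at hl; simp at hl

theorem path_antichain [DecidableEq α] : ∀ (T : PTree α) {a b : α} {p q : List Bool},
    p ∈ T.pathsTo a → q ∈ T.pathsTo b → p <+: q → p = q
  | .leaf c, a, b, p, q, hp, hq, _ => by
    rw [mem_pathsTo_leaf] at hp hq; rw [hp.2, hq.2]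
  | .node l r, a, b, p, q, hp, hq, hpq => by
    rw [mem_pathsTo_node] at hp hq
    rcases hp with ⟨p', hp', rfl⟩ | ⟨p', hp', rfl⟩ <;>
      rcases hq with ⟨q', hq', rfl⟩ | ⟨q', hq', rfl⟩ <;>
      rw [List.cons_prefix_cons] at hpq
    · rw [path_antichain l hp' hq' hpq.2]
    · exact absurd hpq.1 (by simp)
    · exact absurd hpq.1 (by simp)
    · rw [path_antichain r hp' hq' hpq.2]

theorem path_det [DecidableEq α] : ∀ (T : PTree α) {a b : α} {p : List Bool},
    p ∈ T.pathsTo a → p ∈ T.pathsTo b → a = b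
  | .leaf c, a, b, p, hp, hq => by
    rw [mem_pathsTo_leaf] at hp hq; rw [hp.1, hq.1]
  | .node l r, a, b, p, hp, hq => by
    rw [mem_pathsTo_node] at hp hq
    rcases hp with ⟨p', hp', rfl⟩ | ⟨p', hp', rfl⟩ <;>
      rcases hq with ⟨q', hq', hq2⟩ | ⟨q', hq', hq2⟩
    · injection hq2 with h1 h2; subst h2; exact path_det l hp' hq'
    · injection hq2 with h1 h2; exact absurd h1 (by simp)
    · injection hq2 with h1 h2; exact absurd h1 (by simp)
    · injection hq2 with h1 h2; subst h2; exact path_det r hp' hq'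

theorem exists_path [DecidableEq α] : ∀ T : PTree α, ∃ a p, p ∈ T.pathsTo a
  | .leaf c => ⟨c, [], by simp [pathsTo]⟩
  | .node l r => by
    obtain ⟨a, p, hp⟩ := exists_path l
    exact ⟨a, false :: p, mem_pathsTo_node.mpr (Or.inl ⟨p, hp, rfl⟩)⟩

theorem sibling_leaf [DecidableEq α] : ∀ (T : PTree α) {a : α} (u : List Bool) (x : Bool)
    {v : List Bool}, (u ++ x :: v) ∈ T.pathsTo a →
    ∃ b s, s ∈ T.pathsTo b ∧ (u ++ [!x]) <+: s
  | .leaf c, a, u, x, v, hp => by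
    rw [mem_pathsTo_leaf] at hp; exact absurd hp.2 (by simp)
  | .node l r, a, u, x, v, hp => by
    rw [mem_pathsTo_node] at hp
    cases u with
    | nil =>
      rcases hp with ⟨p', hp', he⟩ | ⟨p', hp', he⟩
      · injection he with h1 h2
        subst h1
        obtain ⟨b, q, hq⟩ := exists_path r
        exact ⟨b, true :: q, mem_pathsTo_node.mpr (Or.inr ⟨q, hq, rfl⟩),
          by simp⟩
      · injection he with h1 h2
        subst h1
        obtain ⟨b, q, hq⟩ := exists_path l
        exact ⟨b, false :: q, mem_pathsTo_node.mpr (Or.inl ⟨q, hq, rfl⟩),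
          by simp⟩
    | cons y u' =>
      rcases hp with ⟨p', hp', he⟩ | ⟨p', hp', he⟩ <;>
        injection he with h1 h2 <;> subst h1 <;> rw [← h2] at hp'
      · obtain ⟨b, s, hs, hpre⟩ := sibling_leaf l u' x hp'
        exact ⟨b, false :: s, mem_pathsTo_node.mpr (Or.inl ⟨s, hs, rfl⟩),
          by simpa using hpre⟩
      · obtain ⟨b, s, hs, hpre⟩ := sibling_leaf r u' x hp'
        exact ⟨b, true :: s, mem_pathsTo_node.mpr (Or.inr ⟨s, hs, rfl⟩),
          by simpa using hpre⟩

theorem lcp_split : ∀ p q : List Bool, ¬ p <+: q → ¬ q <+: p →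
    ∃ b p' q', p = lcp p q ++ b :: p' ∧ q = lcp p q ++ (!b) :: q'
  | [], q, h1, _ => absurd List.nil_prefix h1
  | p, [], _, h2 => absurd List.nil_prefix h2
  | x :: xs, y :: ys, h1, h2 => by
    by_cases h : x = y
    · subst h
      have h1' : ¬ xs <+: ys := fun hh => h1 (List.cons_prefix_cons.mpr ⟨rfl, hh⟩)
      have h2' : ¬ ys <+: xs := fun hh => h2 (List.cons_prefix_cons.mpr ⟨rfl, hh⟩)
      obtain ⟨b, p', q', e1, e2⟩ := lcp_split xs ys h1' h2'
      refine ⟨b, p', q', ?_, ?_⟩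
      · rw [lcp_cons_same, List.cons_append, ← e1]
      · rw [lcp_cons_same, List.cons_append, ← e2]
    · have hy : y = !x := by cases x <;> cases y <;> simp_all
      subst hy
      exact ⟨x, xs, ys, by simp [lcp, h], by simp [lcp]⟩

theorem prefix_cancel : ∀ (u : List Bool) {s t : List Bool}, u ++ s <+: u ++ t → s <+: t
  | [], _, _, h => h
  | x :: u, s, t, h => by
    rw [List.cons_append, List.cons_append, List.cons_prefix_cons] at h
    exact prefix_cancel u h.2

end PTree

/-- If two distinct leaves `i, j` of a rooted binary phylogenetic tree `T` on `n ≥ 3`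
distinctly labeled leaves do not form a cherry, then `C_{i,j} < n - 2` in `R(T)`. -/
theorem stmt5 {α : Type} [DecidableEq α] (T : PTree α) (n : ℕ) (i j : α)
    (hd : T.distinctLeaves) (hn : T.leafList.length = n) (h3 : 3 ≤ n)
    (hij : i ≠ j) (hi : i ∈ T.leafList) (hj : j ∈ T.leafList)
    (hc : ¬ T.IsCherry i j) :
    PTree.closeness T.Rset i j < n - 2 := by
  classical
  -- unique paths to i and j
  obtain ⟨P, hP⟩ := PTree.path_of_mem T i hi
  obtain ⟨Q, hQ⟩ := PTree.path_of_mem T j hj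
  have hne : P ≠ Q := fun h => hij (PTree.path_det T hP (by rw [h]; exact hQ))
  have hPQ1 : ¬ P <+: Q := fun h => hne (PTree.path_antichain T hP hQ h)
  have hPQ2 : ¬ Q <+: P := fun h => hne (PTree.path_antichain T hQ hP h).symm
  obtain ⟨b, P', Q', eP, eQ⟩ := PTree.lcp_split P Q hPQ1 hPQ2
  set c := PTree.lcp P Q with hceq
  have hcP : c <+: P := PTree.lcp_prefix_left P Q
  have hcQ : c <+: Q := PTree.lcp_prefix_right P Q
  -- not a cherry: one of the two subtrees below the LCA is not a leaf
  have hPQ' : P' ≠ [] ∨ Q' ≠ [] := by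
    by_contra h
    push_neg at h
    exact hc ⟨c, b, by rw [h.1] at eP; rw [← eP]; exact hP,
      by rw [h.2] at eQ; rw [← eQ]; exact hQ⟩
  -- find a third leaf k' below the LCA of i and j
  obtain ⟨k', r', hr', hcr', hki, hkj⟩ :
      ∃ k' r', r' ∈ T.pathsTo k' ∧ c <+: r' ∧ k' ≠ i ∧ k' ≠ j := by
    rcases hPQ' with hP' | hQ'
    · obtain ⟨x, v, rfl⟩ : ∃ x v, P' = x :: v := by
        cases P' with
        | nil => simp at hP'
        | cons x v => exact ⟨x, v, rfl⟩
      have hP2 : ((c ++ [b]) ++ x :: v) ∈ T.pathsTo i := by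
        have he : (c ++ [b]) ++ x :: v = P := by rw [eP]; simp
        rw [he]; exact hP
      obtain ⟨k', r', hr', hpre⟩ := PTree.sibling_leaf T (c ++ [b]) x hP2
      have hcr' : c <+: r' :=
        ((c.prefix_append [b]).trans ((c ++ [b]).prefix_append [!x])).trans hpre
      refine ⟨k', r', hr', hcr', ?_, ?_⟩
      · rintro rfl
        have hrP : r' = P := PTree.paths_unique T hd hr' hP
        rw [hrP, eP] at hpre
        have h2 : [!x] <+: x :: v := PTree.prefix_cancel (c ++ [b])
          (by simpa [List.append_assoc] using hpre)
        rw [List.cons_prefix_cons] at h2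
        exact absurd h2.1 (by simp)
      · rintro rfl
        have hrQ : r' = Q := PTree.paths_unique T hd hr' hQ
        rw [hrQ, eQ] at hpre
        have h2 : b :: [!x] <+: (!b) :: Q' := PTree.prefix_cancel c
          (by simpa [List.append_assoc] using hpre)
        rw [List.cons_prefix_cons] at h2
        exact absurd h2.1 (by simp)
    · obtain ⟨x, v, rfl⟩ : ∃ x v, Q' = x :: v := by
        cases Q' with
        | nil => simp at hQ'
        | cons x v => exact ⟨x, v, rfl⟩
      have hQ2 : ((c ++ [!b]) ++ x :: v) ∈ T.pathsTo j := by
        have he : (c ++ [!b]) ++ x :: v = Q := by rw [eQ]; simp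
        rw [he]; exact hQ
      obtain ⟨k', r', hr', hpre⟩ := PTree.sibling_leaf T (c ++ [!b]) x hQ2
      have hcr' : c <+: r' :=
        ((c.prefix_append [!b]).trans ((c ++ [!b]).prefix_append [!x])).trans hpre
      refine ⟨k', r', hr', hcr', ?_, ?_⟩
      · rintro rfl
        have hrP : r' = P := PTree.paths_unique T hd hr' hP
        rw [hrP, eP] at hpre
        have h2 : (!b) :: [!x] <+: b :: P' := PTree.prefix_cancel c
          (by simpa [List.append_assoc] using hpre)
        rw [List.cons_prefix_cons] at h2
        exact absurd h2.1 (by simp)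
      · rintro rfl
        have hrQ : r' = Q := PTree.paths_unique T hd hr' hQ
        rw [hrQ, eQ] at hpre
        have h2 : [!x] <+: x :: v := PTree.prefix_cancel (c ++ [!b])
          (by simpa [List.append_assoc] using hpre)
        rw [List.cons_prefix_cons] at h2
        exact absurd h2.1 (by simp)
  have hk'mem : k' ∈ T.leafList := PTree.mem_of_path T k' r' hr'
  -- the closeness set avoids i, j and k'
  have hsub : {k | (s(i, j), k) ∈ T.Rset} ⊆
      ↑(((T.leafList.toFinset.erase i).erase j).erase k') := by
    intro k hk
    obtain ⟨x, y, z, hcon, heq⟩ := hk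
    rw [Prod.mk.injEq] at heq
    obtain ⟨hs, hz⟩ := heq
    obtain ⟨p, hp, q, hq, r, hr, hPD⟩ := hcon
    subst hz
    have hkmem : k ∈ T.leafList := PTree.mem_of_path T k r hr
    have hxy : (x = i ∧ y = j) ∨ (x = j ∧ y = i) := by
      rw [Sym2.eq_iff] at hs; tauto
    have hlcp : PTree.lcp p q = c := by
      rcases hxy with ⟨rfl, rfl⟩ | ⟨rfl, rfl⟩
      · rw [PTree.paths_unique T hd hp hP, PTree.paths_unique T hd hq hQ]
      · rw [PTree.paths_unique T hd hp hQ, PTree.paths_unique T hd hq hP, PTree.lcp_comm]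
    have hcp : c <+: p := by
      rcases hxy with ⟨rfl, rfl⟩ | ⟨rfl, rfl⟩
      · rw [PTree.paths_unique T hd hp hP]; exact hcP
      · rw [PTree.paths_unique T hd hp hQ]; exact hcQ
    have notk : ∀ s₀, s₀ ∈ T.pathsTo k → c <+: s₀ → False := by
      intro s₀ hs₀ hcs
      have hrs : r = s₀ := PTree.paths_unique T hd hr hs₀
      subst hrs
      obtain ⟨h1, h2⟩ := hPD
      rw [hlcp] at h1 h2
      have h3 : c <+: PTree.lcp p r := PTree.prefix_lcp c p r hcp hcs
      exact h2 (h1.eq_of_length (Nat.le_antisymm h1.length_le h3.length_le))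
    have hki' : k ≠ i := fun h => notk P (by rw [h]; exact hP) hcP
    have hkj' : k ≠ j := fun h => notk Q (by rw [h]; exact hQ) hcQ
    have hkk' : k ≠ k' := fun h => notk r' (by rw [h]; exact hr') hcr'
    simp only [Finset.mem_coe, Finset.mem_erase, List.mem_toFinset]
    exact ⟨hkk', hkj', hki', hkmem⟩
  -- cardinality bookkeeping
  have h1 : T.leafList.toFinset.card = n := by
    rw [List.toFinset_card_of_nodup hd, hn]
  have hiF : i ∈ T.leafList.toFinset := List.mem_toFinset.mpr hi
  have hjF : j ∈ T.leafList.toFinset.erase i :=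
    Finset.mem_erase.mpr ⟨hij.symm, List.mem_toFinset.mpr hj⟩
  have hkF : k' ∈ (T.leafList.toFinset.erase i).erase j :=
    Finset.mem_erase.mpr ⟨hkj, Finset.mem_erase.mpr ⟨hki, List.mem_toFinset.mpr hk'mem⟩⟩
  have hcard : (((T.leafList.toFinset.erase i).erase j).erase k').card = n - 3 := by
    rw [Finset.card_erase_of_mem hkF, Finset.card_erase_of_mem hjF,
      Finset.card_erase_of_mem hiF, h1]
    omega
  have hle : {k | (s(i, j), k) ∈ T.Rset}.ncard ≤ n - 3 := by
    rw [← hcard, ← Set.ncard_coe_finset]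
    exact Set.ncard_le_ncard hsub (Finset.finite_toSet _)
  unfold PTree.closeness
  omega
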